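/- arXiv:2502.19720 — 3 statements merged into one kernel-verified Lean document; each statement's English description precedes it below -/
import Mathlib

section
/- For a reversible consensus matrix P with conductance matrix C = nΠP, the weighted average effective resistance equals (1/n) times the trace of the Green matrix: R̄_w(C) = (1/n) tr G(P), where G(P) = Σ_{t≥0} (P^t − 𝟙πᵀ). -/
open Matrix

/-- A consensus matrix: entrywise nonnegative, row-stochastic, irreducible
(for every pair of indices some power has a positive entry), with positive diagonal. -/
def IsConsensus {n : ℕ} (P : Matrix (Fin n) (Fin n) ℝ) : Prop :=
  (∀ i j, 0 ≤ P i j) ∧ (∀ i, (∑ j, P i j) = 1) ∧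
  (∀ i j, ∃ k : ℕ, 0 < (P ^ k) i j) ∧ (∀ i, 0 < P i i)

/-- `mu` is the invariant measure of `P`: strictly positive, sums to `1`,
and is a left fixed vector of `P`. -/
def IsInvMeasure {n : ℕ} (P : Matrix (Fin n) (Fin n) ℝ) (mu : Fin n → ℝ) : Prop :=
  (∀ i, 0 < mu i) ∧ (∑ i, mu i) = 1 ∧ (∀ j, (∑ i, mu i * P i j) = mu j)

/-- The time reversal `P* = Π⁻¹ Pᵀ Π` with `Π = diag(mu)`. -/
noncomputable def Pstar {n : ℕ} (P : Matrix (Fin n) (Fin n) ℝ) (mu : Fin n → ℝ) :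
    Matrix (Fin n) (Fin n) ℝ :=
  Matrix.diagonal (fun i => (mu i)⁻¹) * Pᵀ * Matrix.diagonal mu

/-- The graph Laplacian `L(C) = diag(C 𝟙) − C`. -/
def lap {n : ℕ} (C : Matrix (Fin n) (Fin n) ℝ) : Matrix (Fin n) (Fin n) ℝ :=
  Matrix.diagonal (fun i => ∑ j, C i j) - C

/-- A conductance matrix: symmetric, entrywise nonnegative, irreducible. -/
def IsConductance {n : ℕ} (C : Matrix (Fin n) (Fin n) ℝ) : Prop :=
  Cᵀ = C ∧ (∀ i j, 0 ≤ C i j) ∧ (∀ i j, ∃ k : ℕ, 0 < (C ^ k) i j)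

/-- The effective resistance between `a` and `b`: `v a - v b` for a solution `v`
of `L(C) v = e_a - e_b` (junk value `0` if no solution exists). -/
noncomputable def effRes {n : ℕ} (C : Matrix (Fin n) (Fin n) ℝ) (a b : Fin n) : ℝ :=
  open Classical in
  if h : ∃ v : Fin n → ℝ, lap C *ᵥ v = Pi.single a 1 - Pi.single b 1 then
    h.choose a - h.choose b
  else 0

/-- The average effective resistance `(1/(2 n²)) Σ_{u,v} R_{uv}(C)`. -/
noncomputable def avgRes {n : ℕ} (C : Matrix (Fin n) (Fin n) ℝ) : ℝ :=
  (1 / (2 * (n : ℝ) ^ 2)) * ∑ u, ∑ v, effRes C u v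

/-- The unit-conductance matrix of the undirected graph associated with `P`:
edge `{u,v}` iff `P u v ≠ 0` or `P v u ≠ 0`. -/
noncomputable def adjMat {n : ℕ} (P : Matrix (Fin n) (Fin n) ℝ) : Matrix (Fin n) (Fin n) ℝ :=
  Matrix.of fun i j => if i ≠ j ∧ (P i j ≠ 0 ∨ P j i ≠ 0) then (1 : ℝ) else 0

/-- The LQ cost `J(P) = (1/n) Σ_{t≥0} ‖P^t − 𝟙 muᵀ‖_F²`. -/
noncomputable def LQcost {n : ℕ} (P : Matrix (Fin n) (Fin n) ℝ) (mu : Fin n → ℝ) : ℝ :=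
  (1 / (n : ℝ)) *
    ∑' t : ℕ, ∑ i, ∑ j,
      ((P ^ t - Matrix.vecMulVec (fun _ => 1) mu : Matrix (Fin n) (Fin n) ℝ) i j) ^ 2

/-- The weighted LQ cost `J_w(P)`. -/
noncomputable def LQcostW {n : ℕ} (P : Matrix (Fin n) (Fin n) ℝ) (mu : Fin n → ℝ) : ℝ :=
  ∑' t : ℕ, Matrix.trace ((1 - Matrix.vecMulVec mu (fun _ => 1)) * Pᵀ ^ t *
    Matrix.diagonal mu * P ^ t * (1 - Matrix.vecMulVec (fun _ => 1) mu))

/-- The Green matrix `G(P) = Σ_{t≥0} (P^t − 𝟙 muᵀ)`. -/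
noncomputable def Green {n : ℕ} (P : Matrix (Fin n) (Fin n) ℝ) (mu : Fin n → ℝ) :
    Matrix (Fin n) (Fin n) ℝ :=
  ∑' t : ℕ, (P ^ t - Matrix.vecMulVec (fun _ => 1) mu)

/-- Out-degree (excluding self-loops) of node `i` in the directed graph of `P`. -/
noncomputable def outDeg {n : ℕ} (P : Matrix (Fin n) (Fin n) ℝ) (i : Fin n) : ℕ :=
  (Finset.univ.filter fun j => j ≠ i ∧ P i j ≠ 0).card

/-- In-degree (excluding self-loops) of node `j` in the directed graph of `P`. -/
noncomputable def inDeg {n : ℕ} (P : Matrix (Fin n) (Fin n) ℝ) (j : Fin n) : ℕ :=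
  (Finset.univ.filter fun i => i ≠ j ∧ P i j ≠ 0).card

/-- The weighted average effective resistance `(1/2) Σ_{u,v} R_{uv}(C) mu_u mu_v`. -/
noncomputable def wAvgRes {n : ℕ} (C : Matrix (Fin n) (Fin n) ℝ) (mu : Fin n → ℝ) : ℝ :=
  (1 / 2) * ∑ u, ∑ v, effRes C u v * mu u * mu v

/-!
With `C = nΠP` the Laplacian is `L(C) = nΠ(I - P)`. Since `(I - P) G = I - 𝟙μᵀ`, the vector
`v = (1/n) G Π⁻¹ (e_a - e_b)` solves `L(C) v = e_a - e_b`; it is the solution up to constants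
because `P` is primitive (irreducible with positive diagonal), so by the maximum principle its
harmonic vectors are constant. Hence `R_ab = (1/n) (e_a - e_b)ᵀ G Π⁻¹ (e_a - e_b)`, and averaging
against `μ ⊗ μ` the mixed terms vanish because the rows of `G` sum to zero, leaving `(2/n) tr G`.
The series defining `G` converges geometrically by Doeblin's argument, as a power of `P` is
entrywise positive.
-/

open Finset Filter Topology

theorem summable_comp_div {g : ℕ → ℝ} (hg : Summable g) (hg0 : ∀ q, 0 ≤ g q) {K : ℕ}
    (hK : 0 < K) : Summable (fun t => g (t / K)) := by
  have : NeZero K := ⟨hK.ne'⟩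
  rw [← (Nat.divModEquiv K).symm.summable_iff]
  refine (hg.mul_of_nonneg (.of_finite (f := fun _ : Fin K => (1 : ℝ))) hg0
    fun _ => zero_le_one).congr fun ⟨q, r⟩ => ?_
  change g q * 1 = g ((q * K + r) / K)
  rw [mul_one, Nat.add_comm, Nat.add_mul_div_right _ _ hK, Nat.div_eq_of_lt r.2, Nat.zero_add]

namespace Matrix

section

variable {ι : Type*} [Fintype ι] [DecidableEq ι]

theorem pow_apply_pos_of_le {A : Matrix ι ι ℝ} (hA : ∀ i j, 0 ≤ A i j)
    (hdiag : ∀ i, 0 < A i i) {i j : ι} {k m : ℕ} (hk : 0 < (A ^ k) i j) (hkm : k ≤ m) :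
    0 < (A ^ m) i j := by
  induction m, hkm using Nat.le_induction with
  | base => exact hk
  | succ m _ ih =>
    rw [pow_succ, mul_apply]
    exact (mul_pos ih (hdiag j)).trans_le <| single_le_sum (f := fun l => (A ^ m) i l * A l j)
      (fun l _ => mul_nonneg (pow_apply_nonneg hA m i l) (hA l j)) (mem_univ j)

theorem isPrimitive_of_diag_pos {A : Matrix ι ι ℝ} (hA : ∀ i j, 0 ≤ A i j)
    (hdiag : ∀ i, 0 < A i i) (hirr : ∀ i j, ∃ k, 0 < (A ^ k) i j) : A.IsPrimitive := by
  choose k hk using hirr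
  refine ⟨hA, 1 + univ.sup (fun p : ι × ι => k p.1 p.2), by positivity, fun i j => ?_⟩
  refine pow_apply_pos_of_le hA hdiag (hk i j) (le_add_left ?_)
  exact le_sup (f := fun p : ι × ι => k p.1 p.2) (mem_univ (i, j))

/-- Doeblin's contraction: the part `ε μ` of each row of `Q` is annihilated by the `μ`-centred
columns of `D`, and the remaining row mass is `1 - ε`. -/
theorem abs_mul_apply_le_of_le_apply {Q D : Matrix ι ι ℝ} {μ : ι → ℝ} {ε c : ℝ}
    (hQ : Q ∈ rowStochastic ℝ ι) (hμ : ∑ i, μ i = 1) (hQμ : ∀ i k, ε * μ k ≤ Q i k)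
    (hD : μ ᵥ* D = 0) (hc : ∀ k j, |D k j| ≤ c) (i j : ι) :
    |(Q * D) i j| ≤ (1 - ε) * c := by
  have hcentred : ∑ k, μ k * D k j = 0 := congrFun hD j
  have hrow : ∑ k, (Q i k - ε * μ k) = 1 - ε := by
    rw [sum_sub_distrib, sum_row_of_mem_rowStochastic hQ, ← mul_sum, hμ, mul_one]
  calc |(Q * D) i j| = |∑ k, (Q i k - ε * μ k) * D k j| := by
        simp only [mul_apply, sub_mul, sum_sub_distrib, mul_assoc, ← mul_sum, hcentred,
          mul_zero, sub_zero]
    _ ≤ ∑ k, (Q i k - ε * μ k) * c := by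
        refine (abs_sum_le_sum_abs _ _).trans (sum_le_sum fun k _ => ?_)
        rw [abs_mul, abs_of_nonneg (sub_nonneg.2 (hQμ i k))]
        exact mul_le_mul_of_nonneg_left (hc k j) (sub_nonneg.2 (hQμ i k))
    _ = (1 - ε) * c := by rw [← sum_mul, hrow]

theorem eq_of_mulVec_eq_self_of_pos {Q : Matrix ι ι ℝ} (hQ : Q ∈ rowStochastic ℝ ι)
    (hpos : ∀ i j, 0 < Q i j) {u : ι → ℝ} (hu : Q *ᵥ u = u) (i j : ι) : u i = u j := by
  obtain ⟨m, -, hm⟩ := exists_max_image univ u ⟨i, mem_univ i⟩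
  suffices h : ∀ k, u k = u m by rw [h i, h j]
  intro k
  by_contra hk
  have hlt : (Q *ᵥ u) m < u m := calc
    (Q *ᵥ u) m = ∑ l, Q m l * u l := rfl
    _ < ∑ l, Q m l * u m :=
        sum_lt_sum (fun l _ => by gcongr; exacts [(hpos m l).le, hm l (mem_univ l)])
          ⟨k, mem_univ k, by gcongr; exacts [hpos m k, lt_of_le_of_ne (hm k (mem_univ k)) hk]⟩
    _ = u m := by rw [← sum_mul, sum_row_of_mem_rowStochastic hQ, one_mul]
  exact hlt.ne (congrFun hu m)

variable {P : Matrix ι ι ℝ} {μ : ι → ℝ}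

theorem pow_mulVec_eq_self {u : ι → ℝ} (hu : P *ᵥ u = u) (t : ℕ) : P ^ t *ᵥ u = u := by
  induction t with
  | zero => simp
  | succ t ih => rw [pow_succ, ← mulVec_mulVec, hu, ih]

theorem IsPrimitive.eq_of_mulVec_eq_self (hP : P ∈ rowStochastic ℝ ι) (hprim : P.IsPrimitive)
    {u : ι → ℝ} (hu : P *ᵥ u = u) (i j : ι) : u i = u j := by
  obtain ⟨-, K, -, hpos⟩ := hprim
  exact eq_of_mulVec_eq_self_of_pos (pow_mem hP K) hpos (pow_mulVec_eq_self hu K) i j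

theorem vecMul_pow_eq_self (hinv : μ ᵥ* P = μ) (t : ℕ) : μ ᵥ* (P ^ t) = μ := by
  induction t with
  | zero => simp
  | succ t ih => rw [pow_succ, ← vecMul_vecMul, ih, hinv]

theorem vecMul_pow_sub_vecMulVec (hμ : ∑ i, μ i = 1) (hinv : μ ᵥ* P = μ) (t : ℕ) :
    μ ᵥ* (P ^ t - vecMulVec 1 μ) = 0 := by
  rw [vecMul_sub, vecMul_pow_eq_self hinv, vecMul_vecMulVec, dotProduct_one, hμ, one_smul,
    sub_self]

theorem pow_mul_pow_sub_vecMulVec (hP : P ∈ rowStochastic ℝ ι) (s t : ℕ) :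
    P ^ s * (P ^ t - vecMulVec 1 μ) = P ^ (s + t) - vecMulVec 1 μ := by
  rw [mul_sub, ← pow_add, mul_vecMulVec, (pow_mem hP s).2]

theorem abs_pow_sub_vecMulVec_apply_le_one (hP : P ∈ rowStochastic ℝ ι) (hμ0 : ∀ i, 0 ≤ μ i)
    (hμ : ∑ i, μ i = 1) (t : ℕ) (i j : ι) :
    |(P ^ t - vecMulVec 1 μ : Matrix ι ι ℝ) i j| ≤ 1 := by
  have hμ1 : μ j ≤ 1 := hμ ▸ single_le_sum (fun k _ => hμ0 k) (mem_univ j)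
  rw [sub_apply, vecMulVec_apply, Pi.one_apply, one_mul, abs_sub_le_iff]
  constructor <;> linarith [hμ0 j, nonneg_of_mem_rowStochastic (pow_mem hP t) (i := i) (j := j),
    le_one_of_mem_rowStochastic (pow_mem hP t) (i := i) (j := j)]

theorem abs_pow_sub_vecMulVec_apply_le (hP : P ∈ rowStochastic ℝ ι) (hμ0 : ∀ i, 0 ≤ μ i)
    (hμ : ∑ i, μ i = 1) (hinv : μ ᵥ* P = μ) {K : ℕ} {ε : ℝ}
    (hPK : ∀ i k, ε * μ k ≤ (P ^ K) i k) (t : ℕ) (i j : ι) :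
    |(P ^ t - vecMulVec 1 μ : Matrix ι ι ℝ) i j| ≤ (1 - ε) ^ (t / K) := by
  have key : ∀ q r i j,
      |(P ^ (K * q + r) - vecMulVec 1 μ : Matrix ι ι ℝ) i j| ≤ (1 - ε) ^ q := by
    intro q r
    induction q with
    | zero => simpa using abs_pow_sub_vecMulVec_apply_le_one hP hμ0 hμ r
    | succ q ih =>
      intro i j
      rw [Nat.mul_succ, Nat.add_right_comm, Nat.add_comm, ← pow_mul_pow_sub_vecMulVec hP,
        pow_succ']
      exact abs_mul_apply_le_of_le_apply (pow_mem hP K) hμ hPK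
        (vecMul_pow_sub_vecMulVec hμ hinv _) ih i j
  simpa only [Nat.div_add_mod] using key (t / K) (t % K) i j

theorem summable_pow_sub_vecMulVec (hP : P ∈ rowStochastic ℝ ι) (hprim : P.IsPrimitive)
    (hμ0 : ∀ i, 0 ≤ μ i) (hμ : ∑ i, μ i = 1) (hinv : μ ᵥ* P = μ) :
    Summable (fun t => P ^ t - vecMulVec 1 μ) := by
  obtain ⟨-, K, hK, hpos⟩ := hprim
  obtain ⟨ε, ⟨hε1, hεP⟩, hε0⟩ : ∃ ε, (ε ≤ 1 ∧ ∀ i k, ε ≤ (P ^ K) i k) ∧ 0 < ε :=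
    (((eventually_le_nhds one_pos).and (eventually_all.2 fun i => eventually_all.2 fun k =>
      eventually_le_nhds (hpos i k))).filter_mono nhdsWithin_le_nhds |>.and
      self_mem_nhdsWithin).exists (f := 𝓝[>] 0)
  have hμ1 : ∀ k, μ k ≤ 1 := fun k => hμ ▸ single_le_sum (fun k _ => hμ0 k) (mem_univ k)
  have hPK : ∀ i k, ε * μ k ≤ (P ^ K) i k := fun i k =>
    (mul_le_of_le_one_right hε0.le (hμ1 k)).trans (hεP i k)
  refine Pi.summable.2 fun i => Pi.summable.2 fun j => ?_
  have hgeom := summable_geometric_of_lt_one (r := 1 - ε) (by linarith) (by linarith)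
  refine .of_norm_bounded (summable_comp_div hgeom (fun q => pow_nonneg (by linarith) q) hK)
    fun t => ?_
  exact abs_pow_sub_vecMulVec_apply_le hP hμ0 hμ hinv hPK t i j

end

theorem sum_sum_resistance_mul_mul_eq_two_mul_trace {ι : Type*} [Fintype ι] {G : Matrix ι ι ℝ}
    {μ : ι → ℝ} (hG : G *ᵥ 1 = 0) (hμ0 : ∀ i, μ i ≠ 0) (hμ : ∑ i, μ i = 1) :
    ∑ u, ∑ v, (G u u / μ u - G u v / μ v - G v u / μ u + G v v / μ v) * μ u * μ v =
      2 * trace G := by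
  have hrow : ∀ u, ∑ v, G u v = 0 := fun u => by simpa [mulVec, dotProduct] using congrFun hG u
  have hterm : ∀ u v, (G u u / μ u - G u v / μ v - G v u / μ u + G v v / μ v) * μ u * μ v =
      G u u * μ v - μ u * G u v - μ v * G v u + G v v * μ u := fun u v => by
    field_simp [hμ0 u, hμ0 v]
  simp only [hterm, sum_add_distrib, sum_sub_distrib, ← mul_sum, ← sum_mul, hμ, hrow]
  rw [sum_comm (f := fun u v => μ v * G v u)]
  simp only [← mul_sum, hrow, mul_zero, sum_const_zero, trace, diag_apply]
  ring

end Matrix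

section Resistance

variable {n : ℕ} {P : Matrix (Fin n) (Fin n) ℝ} {μ : Fin n → ℝ}

theorem green_eq_tsum : Green P μ = ∑' t, (P ^ t - vecMulVec 1 μ) := rfl

theorem sub_mul_green (hP : P *ᵥ 1 = 1) (hG : Summable fun t => P ^ t - vecMulVec 1 μ) :
    (1 - P) * Green P μ = 1 - vecMulVec 1 μ := by
  have hshift : P * Green P μ = ∑' t, (P ^ (t + 1) - vecMulVec 1 μ) := by
    rw [green_eq_tsum, ← hG.tsum_mul_left]
    simp only [mul_sub, ← pow_succ', mul_vecMulVec, hP]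
  rw [sub_mul, one_mul, hshift, green_eq_tsum, hG.tsum_eq_zero_add, pow_zero,
    add_sub_cancel_right]

theorem green_mulVec_one (hP : P ∈ rowStochastic ℝ (Fin n)) (hμ : ∑ i, μ i = 1)
    (hG : Summable fun t => P ^ t - vecMulVec 1 μ) : Green P μ *ᵥ 1 = 0 := by
  have hterm : ∀ t, (P ^ t - vecMulVec 1 μ) *ᵥ 1 = 0 := fun t => by
    rw [sub_mulVec, (pow_mem hP t).2, vecMulVec_mulVec, dotProduct_one, hμ]
    simp
  have hsum : HasSum (fun t => (P ^ t - vecMulVec 1 μ) *ᵥ 1) (Green P μ *ᵥ 1) :=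
    hG.hasSum.map (mulVec.addMonoidHomLeft 1) (continuous_id.matrix_mulVec continuous_const)
  simp only [hterm] at hsum
  exact hsum.unique hasSum_zero

theorem lap_smul_diagonal_mul (hP : P *ᵥ 1 = 1) (c : ℝ) (μ : Fin n → ℝ) :
    lap (c • (diagonal μ * P)) = c • (diagonal μ * (1 - P)) := by
  have hrow : (fun i => ∑ j, (c • (diagonal μ * P)) i j) = c • μ := by
    ext i
    have hPi : ∑ j, P i j = 1 := by simpa [mulVec, dotProduct] using congrFun hP i
    simp [diagonal_mul, ← mul_sum, hPi]
  rw [lap, hrow, mul_sub, mul_one, smul_sub, diagonal_smul]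

theorem effRes_eq_sub {C : Matrix (Fin n) (Fin n) ℝ} {a b : Fin n} {v : Fin n → ℝ}
    (hker : ∀ w, lap C *ᵥ w = 0 → w a = w b)
    (hv : lap C *ᵥ v = Pi.single a 1 - Pi.single b 1) : effRes C a b = v a - v b := by
  have hex : ∃ v, lap C *ᵥ v = Pi.single a 1 - Pi.single b 1 := ⟨v, hv⟩
  have := hker (hex.choose - v) (by rw [mulVec_sub, hex.choose_spec, hv, sub_self])
  rw [effRes, dif_pos hex]
  simp only [Pi.sub_apply] at this
  linarith

theorem effRes_smul_diagonal_mul {c : ℝ} (hc : c ≠ 0) (hP : P *ᵥ 1 = 1) (hμ0 : ∀ i, 0 < μ i)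
    (hharm : ∀ u, P *ᵥ u = u → ∀ i j, u i = u j)
    (hGreen : (1 - P) * Green P μ = 1 - vecMulVec 1 μ) (a b : Fin n) :
    effRes (c • (diagonal μ * P)) a b = c⁻¹ * (Green P μ a a / μ a - Green P μ a b / μ b -
      Green P μ b a / μ a + Green P μ b b / μ b) := by
  set G := Green P μ
  set w : Fin n → ℝ := Pi.single a (μ a)⁻¹ - Pi.single b (μ b)⁻¹
  have hlap := lap_smul_diagonal_mul hP c μ
  refine (effRes_eq_sub (v := c⁻¹ • G *ᵥ w) (fun u hu => hharm u ?_ a b) ?_).trans ?_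
  · rw [hlap, smul_mulVec, ← mulVec_mulVec, smul_eq_zero] at hu
    have hker : (1 - P) *ᵥ u = 0 := funext fun i => by
      simpa [mulVec_diagonal, (hμ0 i).ne'] using congrFun (hu.resolve_left hc) i
    rw [sub_mulVec, one_mulVec, sub_eq_zero] at hker
    exact hker.symm
  · rw [hlap, mulVec_smul, smul_mulVec, smul_smul, inv_mul_cancel₀ hc, one_smul,
      ← mulVec_mulVec, mulVec_mulVec w (1 - P) G, hGreen]
    have hμw : μ ⬝ᵥ w = 0 := by
      simp [w, dotProduct_sub, dotProduct_single, (hμ0 a).ne', (hμ0 b).ne']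
    rw [sub_mulVec, one_mulVec, vecMulVec_mulVec, hμw, MulOpposite.op_zero, zero_smul, sub_zero]
    ext i
    rw [mulVec_diagonal]
    simp only [w, Pi.sub_apply, Pi.single_apply]
    split_ifs <;> simp_all [(hμ0 _).ne']
  · simp only [w, G, mulVec_sub, mulVec_single, Pi.smul_apply, Pi.sub_apply, col_apply,
      MulOpposite.smul_eq_mul_unop, MulOpposite.unop_op, smul_eq_mul, div_eq_mul_inv]
    ring

end Resistance

theorem stmt7_general {n : ℕ} (P : Matrix (Fin n) (Fin n) ℝ) (mu : Fin n → ℝ)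
    (hP : IsConsensus P) (hmu : IsInvMeasure P mu) :
    wAvgRes ((n : ℝ) • (Matrix.diagonal mu * P)) mu =
      (1 / (n : ℝ)) * Matrix.trace (Green P mu) := by
  obtain ⟨hnonneg, hrow, hirr, hdiag⟩ := hP
  obtain ⟨hpos, hsum, hinv⟩ := hmu
  rcases n.eq_zero_or_pos with rfl | hn
  · simp [wAvgRes]
  have hstoch : P ∈ rowStochastic ℝ (Fin n) := mem_rowStochastic_iff_sum.2 ⟨hnonneg, hrow⟩
  have hprim := isPrimitive_of_diag_pos hnonneg hdiag hirr
  have hG := summable_pow_sub_vecMulVec hstoch hprim (fun i => (hpos i).le) hsum (funext hinv)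
  have htrace := sum_sum_resistance_mul_mul_eq_two_mul_trace (green_mulVec_one hstoch hsum hG)
    (fun i => (hpos i).ne') hsum
  simp only [wAvgRes, effRes_smul_diagonal_mul (Nat.cast_ne_zero.2 hn.ne') hstoch.2 hpos
    (fun _ => hprim.eq_of_mulVec_eq_self hstoch) (sub_mul_green hstoch.2 hG), mul_assoc,
    ← mul_sum] at htrace ⊢
  rw [htrace]
  ring

/-- For a reversible consensus matrix `P` with `C = nΠP`,
`R̄_w(C) = (1/n) tr G(P)`. -/
theorem stmt7 {n : ℕ} (P : Matrix (Fin n) (Fin n) ℝ) (mu : Fin n → ℝ)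
    (hP : IsConsensus P) (hmu : IsInvMeasure P mu)
    (hrev : (Matrix.diagonal mu * P)ᵀ = Matrix.diagonal mu * P) :
    wAvgRes ((n : ℝ) • (Matrix.diagonal mu * P)) mu =
      (1 / (n : ℝ)) * Matrix.trace (Green P mu) :=
  stmt7_general P mu hP hmu
end

section
/- Rayleigh's monotonicity law: if C and C' are conductance matrices on the same node set with C ≤ C' entrywise, then for every pair of nodes u, v, the effective resistances satisfy R_{uv}(C) ≥ R_{uv}(C'). -/
/-!
Thomson's principle: for a conductance matrix `C`,
`R_{uv}(C) = max_y (2 (y u - y v) - yᵀ L(C) y)`, the maximum being attained at any potential `w`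
with `L(C) w = e_u - e_v` (such a `w` exists because `L(C)` is symmetric and its kernel consists of
the constants, which are orthogonal to `e_u - e_v`). The energy
`yᵀ L(C) y = ½ Σ_{i,j} C i j (y i - y j)²` is entrywise monotone in `C`, hence so is the maximum.
-/

open Matrix

theorem Matrix.IsHermitian.exists_mulVec_eq {ι : Type*} [Fintype ι] [DecidableEq ι]
    {A : Matrix ι ι ℝ} (hA : A.IsHermitian) {x : ι → ℝ}
    (hx : ∀ y, A *ᵥ y = 0 → x ⬝ᵥ y = 0) : ∃ v, A *ᵥ v = x := by
  have hmem : WithLp.toLp 2 x ∈ (LinearMap.range A.toEuclideanLin)ᗮᗮ := by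
    rw [(isSymmetric_toEuclideanLin_iff.mpr hA).orthogonal_range, Submodule.mem_orthogonal']
    intro y hy
    rw [EuclideanSpace.inner_eq_star_dotProduct, dotProduct_comm]
    exact hx _ (by simpa using congrArg WithLp.ofLp hy)
  rw [Submodule.orthogonal_orthogonal] at hmem
  obtain ⟨v, hv⟩ := hmem
  exact ⟨v, by simpa using congrArg WithLp.ofLp hv⟩

theorem Matrix.PosSemidef.two_mul_dotProduct_sub_le {ι : Type*} [Fintype ι]
    {A : Matrix ι ι ℝ} (hA : A.PosSemidef) {w x : ι → ℝ} (hw : A *ᵥ w = x) (y : ι → ℝ) :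
    2 * (x ⬝ᵥ y) - y ⬝ᵥ (A *ᵥ y) ≤ x ⬝ᵥ w := by
  have hsymm : w ⬝ᵥ (A *ᵥ y) = x ⬝ᵥ y := by
    rw [dotProduct_mulVec, ← mulVec_transpose, ← conjTranspose_eq_transpose_of_trivial,
      hA.1.eq, hw]
  have h := hA.dotProduct_mulVec_nonneg (w - y)
  simp only [star_trivial, mulVec_sub, dotProduct_sub, sub_dotProduct, hw, hsymm] at h
  linarith [dotProduct_comm w x, dotProduct_comm y x]

theorem Matrix.eq_of_pow_apply_pos {ι : Type*} [Fintype ι] [DecidableEq ι]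
    {C : Matrix ι ι ℝ} (hC : ∀ i j, 0 ≤ C i j) {y : ι → ℝ}
    (hy : ∀ i j, C i j ≠ 0 → y i = y j) {k : ℕ} {i j : ι} (h : 0 < (C ^ k) i j) : y i = y j := by
  induction k generalizing i with
  | zero =>
    rw [pow_zero, one_apply] at h
    split_ifs at h with hij
    · rw [hij]
    · exact absurd h (lt_irrefl 0)
  | succ k ih =>
    rw [pow_succ', mul_apply] at h
    obtain ⟨l, -, hl⟩ := Finset.exists_lt_of_sum_lt (f := fun _ => (0 : ℝ)) (by simpa using h)
    exact (hy i l fun h0 => by simp [h0] at hl).trans (ih (pos_of_mul_pos_right hl (hC i l)))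

section Laplacian

variable {n : ℕ}

theorem lap_mulVec_apply (C : Matrix (Fin n) (Fin n) ℝ) (y : Fin n → ℝ) (i : Fin n) :
    (lap C *ᵥ y) i = ∑ j, C i j * (y i - y j) := by
  simp only [lap, mulVec, dotProduct, Matrix.sub_apply, diagonal_apply, sub_mul, ite_mul, zero_mul,
    Finset.sum_sub_distrib, Finset.sum_ite_eq, Finset.mem_univ, if_true, mul_sub,
    ← Finset.sum_mul]

theorem lap_transpose {C : Matrix (Fin n) (Fin n) ℝ} (hC : Cᵀ = C) : (lap C)ᵀ = lap C := by
  simp [lap, transpose_sub, hC]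

theorem dotProduct_lap_mulVec_self {C : Matrix (Fin n) (Fin n) ℝ} (hC : Cᵀ = C)
    (y : Fin n → ℝ) : y ⬝ᵥ (lap C *ᵥ y) = (1 / 2) * ∑ i, ∑ j, C i j * (y i - y j) ^ 2 := by
  have hswap : ∑ i, ∑ j, C i j * (y i - y j) * y j = -∑ i, ∑ j, C i j * (y i - y j) * y i := by
    rw [Finset.sum_comm, ← Finset.sum_neg_distrib]
    refine Finset.sum_congr rfl fun i _ => ?_
    rw [← Finset.sum_neg_distrib]
    refine Finset.sum_congr rfl fun j _ => ?_
    rw [← transpose_apply C i j, hC]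
    ring
  have hsplit : ∑ i, ∑ j, C i j * (y i - y j) ^ 2
      = ∑ i, ∑ j, C i j * (y i - y j) * y i - ∑ i, ∑ j, C i j * (y i - y j) * y j := by
    simp only [← Finset.sum_sub_distrib]
    exact Finset.sum_congr rfl fun i _ => Finset.sum_congr rfl fun j _ => by ring
  have hform : y ⬝ᵥ (lap C *ᵥ y) = ∑ i, ∑ j, C i j * (y i - y j) * y i := by
    simp only [dotProduct, lap_mulVec_apply, Finset.sum_mul, mul_comm (y _)]
  rw [hform, hsplit, hswap]
  ring

theorem posSemidef_lap {C : Matrix (Fin n) (Fin n) ℝ} (hC : Cᵀ = C) (hC₀ : ∀ i j, 0 ≤ C i j) :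
    (lap C).PosSemidef := by
  refine .of_dotProduct_mulVec_nonneg ?_ fun y => ?_
  · rw [IsHermitian, conjTranspose_eq_transpose_of_trivial, lap_transpose hC]
  · rw [star_trivial, dotProduct_lap_mulVec_self hC]
    exact mul_nonneg (by norm_num) <| Finset.sum_nonneg fun i _ => Finset.sum_nonneg
      fun j _ => mul_nonneg (hC₀ i j) (sq_nonneg (y i - y j))

theorem dotProduct_lap_mulVec_self_le {C C' : Matrix (Fin n) (Fin n) ℝ} (hC : Cᵀ = C)
    (hC' : C'ᵀ = C') (hle : ∀ i j, C i j ≤ C' i j) (y : Fin n → ℝ) :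
    y ⬝ᵥ (lap C *ᵥ y) ≤ y ⬝ᵥ (lap C' *ᵥ y) := by
  rw [dotProduct_lap_mulVec_self hC, dotProduct_lap_mulVec_self hC']
  gcongr with i _ j _
  exact hle i j

theorem IsConductance.eq_of_lap_mulVec_eq_zero {C : Matrix (Fin n) (Fin n) ℝ}
    (hC : IsConductance C) {y : Fin n → ℝ} (hy : lap C *ᵥ y = 0) (i j : Fin n) : y i = y j := by
  obtain ⟨hsymm, hC₀, hirr⟩ := hC
  have henergy : ∑ i, ∑ j, C i j * (y i - y j) ^ 2 = 0 := by
    have := dotProduct_lap_mulVec_self hsymm y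
    rw [hy, dotProduct_zero] at this
    linarith
  have hedge : ∀ i j, C i j = 0 ∨ y i = y j := by
    have hterm_nonneg (i j) : 0 ≤ C i j * (y i - y j) ^ 2 := mul_nonneg (hC₀ i j) (sq_nonneg _)
    simpa [Finset.sum_eq_zero_iff_of_nonneg, Finset.sum_nonneg, hterm_nonneg, sub_eq_zero]
      using henergy
  obtain ⟨k, hk⟩ := hirr i j
  exact eq_of_pow_apply_pos hC₀ (fun i j hij => (hedge i j).resolve_left hij) hk

theorem IsConductance.exists_lap_mulVec_eq {C : Matrix (Fin n) (Fin n) ℝ} (hC : IsConductance C)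
    {x : Fin n → ℝ} (hx : ∑ i, x i = 0) : ∃ v, lap C *ᵥ v = x := by
  refine (posSemidef_lap hC.1 hC.2.1).1.exists_mulVec_eq fun y hy => ?_
  rcases isEmpty_or_nonempty (Fin n) with _ | ⟨⟨i₀⟩⟩
  · simp [dotProduct]
  · simp only [dotProduct, hC.eq_of_lap_mulVec_eq_zero hy _ i₀, ← Finset.sum_mul, hx, zero_mul]

theorem isGreatest_effRes {C : Matrix (Fin n) (Fin n) ℝ} (hC : IsConductance C) (u v : Fin n) :
    IsGreatest (Set.range fun y => 2 * (y u - y v) - y ⬝ᵥ (lap C *ᵥ y)) (effRes C u v) := by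
  have hdot (y : Fin n → ℝ) : (Pi.single u 1 - Pi.single v 1) ⬝ᵥ y = y u - y v := by
    simp [sub_dotProduct, single_dotProduct]
  have hex := hC.exists_lap_mulVec_eq (x := Pi.single u 1 - Pi.single v 1) (by
    simp [Finset.sum_sub_distrib])
  rw [effRes, dif_pos hex]
  refine ⟨⟨hex.choose, ?_⟩, ?_⟩
  · simp only [hex.choose_spec, dotProduct_comm _ (Pi.single u 1 - _), hdot]
    ring
  · rintro _ ⟨y, rfl⟩
    simpa only [hdot] using (posSemidef_lap hC.1 hC.2.1).two_mul_dotProduct_sub_le hex.choose_spec y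

end Laplacian

/-- Rayleigh's monotonicity law: increasing conductances entrywise decreases
every effective resistance. -/
theorem stmt12 {n : ℕ} (C C' : Matrix (Fin n) (Fin n) ℝ)
    (hC : IsConductance C) (hC' : IsConductance C')
    (hle : ∀ i j, C i j ≤ C' i j) :
    ∀ u v : Fin n, effRes C' u v ≤ effRes C u v := by
  intro u v
  obtain ⟨y, hy⟩ := (isGreatest_effRes hC' u v).1
  calc effRes C' u v = 2 * (y u - y v) - y ⬝ᵥ (lap C' *ᵥ y) := hy.symm
    _ ≤ 2 * (y u - y v) - y ⬝ᵥ (lap C *ᵥ y) := by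
      gcongr
      exact dotProduct_lap_mulVec_self_le hC.1 hC'.1 hle y
    _ ≤ effRes C u v := (isGreatest_effRes hC u v).2 ⟨y, rfl⟩
end

section
/- Let P be a consensus matrix with P*P = PP*, and let δ_in be the maximum in-degree (excluding self-loops) of the directed graph of P. Then for all nodes u, v, (1/(4δ_in − 2)) R_{uv}(G(P)) ≤ R_{uv}(G(P*P)) ≤ R_{uv}(G(P)). -/
open Matrix

/-!
Both graphs are connected, so `R_{uv}` is `f ⬝ᵥ v` for any solution of `L v = f`,
`f = e_u - e_v`. By the Dirichlet principle, a comparison `xᵀ L_H x ≤ c · xᵀ L_G x` of Laplacian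
quadratic forms gives `R_G ≤ c · R_H`. Since `P` has a positive diagonal, every edge of `G(P)` is
an edge of `G(P*P)`, which gives the upper bound. Since `P*P = PP*`, an edge `{i, j}` of
`G(P*P)` that is not in `G(P)` comes from a common out-neighbour `k` of `i` and `j`, that is,
both lie in the in-neighbourhood of `k`, which has at most `δ_in` vertices, each adjacent to `k`.
Routing `(x_i - x_j)² ≤ 2 (x_i - x_k)² + 2 (x_j - x_k)²` through `k` bounds the Dirichlet energy
of `G(P*P)` by `4 δ_in - 3` times that of `G(P)`.
-/

section Laplacian

variable {V : Type*}

theorem sum_sum_sq_sub_le (s : Finset V) {d : ℕ} (hs : s.card ≤ d) (x : V → ℝ) (c : ℝ) :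
    ∑ i ∈ s, ∑ j ∈ s, (x i - x j) ^ 2 ≤ 4 * (d - 1) * ∑ i ∈ s, (x i - c) ^ 2 := by
  classical
  set a : V → ℝ := fun i => (x i - c) ^ 2
  calc ∑ i ∈ s, ∑ j ∈ s, (x i - x j) ^ 2
      = ∑ i ∈ s, ∑ j ∈ s.erase i, (x i - x j) ^ 2 :=
        Finset.sum_congr rfl fun i _ => (Finset.sum_erase _ (by simp)).symm
    _ ≤ ∑ i ∈ s, ∑ j ∈ s.erase i, (2 * a i + 2 * a j) := by
        gcongr with i _ j _
        nlinarith [sq_nonneg (x i + x j - 2 * c)]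
    _ = ∑ i ∈ s, (∑ j ∈ s, (2 * a i + 2 * a j) - (2 * a i + 2 * a i)) :=
        Finset.sum_congr rfl fun i hi => Finset.sum_erase_eq_sub hi
    _ = 4 * (s.card - 1) * ∑ i ∈ s, a i := by
        simp only [Finset.sum_sub_distrib, Finset.sum_add_distrib, Finset.sum_const,
          nsmul_eq_mul, ← Finset.mul_sum]
        ring
    _ ≤ 4 * (d - 1) * ∑ i ∈ s, a i := by
        gcongr

variable [Fintype V]

theorem dotProduct_le_mul_of_quadForm_le {L M : Matrix V V ℝ} (hM : M.PosSemidef) {c : ℝ}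
    (hc : 0 < c) (hML : ∀ x, x ⬝ᵥ (M *ᵥ x) ≤ c * (x ⬝ᵥ (L *ᵥ x))) {f v w : V → ℝ}
    (hv : L *ᵥ v = f) (hw : M *ᵥ w = f) : f ⬝ᵥ v ≤ c * (f ⬝ᵥ w) := by
  -- Dirichlet principle: expand `0 ≤ (v - c • w) ⬝ᵥ M *ᵥ (v - c • w)`.
  have hwv : w ⬝ᵥ (M *ᵥ v) = f ⬝ᵥ v := by
    rw [dotProduct_mulVec, ← mulVec_transpose, ← conjTranspose_eq_transpose_of_trivial,
      hM.isHermitian.eq, hw]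
  have hvv : v ⬝ᵥ (M *ᵥ v) ≤ c * (f ⬝ᵥ v) := by
    simpa only [hv, dotProduct_comm v f] using hML v
  have h0 := hM.dotProduct_mulVec_nonneg (v - c • w)
  simp only [star_trivial, mulVec_sub, mulVec_smul, sub_dotProduct, dotProduct_sub,
    smul_dotProduct, dotProduct_smul, hw, hwv, smul_eq_mul] at h0
  rw [dotProduct_comm v f, dotProduct_comm w f] at h0
  have : c * (f ⬝ᵥ v) ≤ c * (c * (f ⬝ᵥ w)) := by nlinarith
  exact le_of_mul_le_mul_left this hc

noncomputable def edgeEnergy (G : SimpleGraph V) [DecidableRel G.Adj] (x : V → ℝ) : ℝ :=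
  ∑ i, ∑ j, if G.Adj i j then (x i - x j) ^ 2 else 0

theorem edgeEnergy_nonneg (G : SimpleGraph V) [DecidableRel G.Adj] (x : V → ℝ) :
    0 ≤ edgeEnergy G x := by
  unfold edgeEnergy; positivity

theorem dotProduct_lapMatrix_mulVec [DecidableEq V] (G : SimpleGraph V) [DecidableRel G.Adj]
    (x : V → ℝ) :
    x ⬝ᵥ (G.lapMatrix ℝ *ᵥ x) = edgeEnergy G x / 2 := by
  rw [← toLinearMap₂'_apply', G.lapMatrix_toLinearMap₂' ℝ x, edgeEnergy]

theorem edgeEnergy_mono {G H : SimpleGraph V} [DecidableRel G.Adj] [DecidableRel H.Adj]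
    (h : G ≤ H) (x : V → ℝ) : edgeEnergy G x ≤ edgeEnergy H x :=
  Finset.sum_le_sum fun i _ => Finset.sum_le_sum fun j _ => by
    split_ifs with hG hH
    · exact le_rfl
    · exact absurd (h hG) hH
    · positivity
    · exact le_rfl

theorem SimpleGraph.Preconnected.exists_lapMatrix_mulVec_eq [DecidableEq V]
    {G : SimpleGraph V} [DecidableRel G.Adj] (hG : G.Preconnected) {f : V → ℝ} (hf : ∑ i, f i = 0) :
    ∃ w, G.lapMatrix ℝ *ᵥ w = f := by
  -- With `J` the all-ones matrix, the entries of `(L + J) x` sum to `card V * ∑ x`. Hence the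
  -- kernel of `L + J` consists of constant vectors with zero sum, and a preimage `w` of `f` under
  -- the invertible `L + J` has `J w = 0`.
  set L := G.lapMatrix ℝ
  set J : Matrix V V ℝ := of fun _ _ => 1
  have hJ : ∀ x, J *ᵥ x = fun _ => ∑ j, x j := fun x => by ext; simp [J, mulVec, dotProduct]
  have hsumL : ∀ x, ∑ i, (L *ᵥ x) i = 0 := fun x => by
    rw [← dotProduct_one, dotProduct_comm, dotProduct_mulVec, ← mulVec_transpose,
      (G.isSymm_lapMatrix (R := ℝ)).eq]
    rw [show (1 : V → ℝ) = fun _ => 1 from rfl, G.lapMatrix_mulVec_const_eq_zero,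
      zero_dotProduct]
  have hsum : ∀ x, ∑ i, ((L + J) *ᵥ x) i = Fintype.card V * ∑ j, x j := fun x => by
    simp [add_mulVec, Finset.sum_add_distrib, hsumL, hJ]
  have hsum_eq_zero : ∀ x, ∑ i, ((L + J) *ᵥ x) i = 0 → [Nonempty V] → ∑ j, x j = 0 :=
    fun x hx _ => by simpa [hsum, Fintype.card_ne_zero] using hx
  have hunit : IsUnit (L + J) := by
    rw [isUnit_iff_isUnit_det, isUnit_iff_ne_zero, Ne, ← exists_mulVec_eq_zero_iff]
    rintro ⟨x, hx0, hx⟩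
    refine hx0 (funext fun i => ?_)
    have : Nonempty V := ⟨i⟩
    have hx_sum := hsum_eq_zero x (by simp [hx])
    have hLx : L *ᵥ x = 0 := by simpa [add_mulVec, hJ, hx_sum, ← Pi.zero_def] using hx
    rw [SimpleGraph.lapMatrix_mulVec_eq_zero_iff_forall_reachable] at hLx
    simpa [← hLx i _ (hG i _), Fintype.card_ne_zero] using hx_sum
  obtain ⟨w, hw⟩ := mulVec_surjective_iff_isUnit.mpr hunit f
  refine ⟨w, funext fun i => ?_⟩
  have : Nonempty V := ⟨i⟩
  have hw_sum := hsum_eq_zero w (by rw [hw, hf])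
  simpa [add_mulVec, hJ, hw_sum] using congrFun hw i

section Cliques

variable {G H : SimpleGraph V} [DecidableRel G.Adj] [DecidableRel H.Adj] (N : V → Finset V)

theorem edgeEnergy_le_add_of_adj_imp
    (hH : ∀ i j, H.Adj i j → G.Adj i j ∨ ∃ k, i ∈ N k ∧ j ∈ N k) (x : V → ℝ) :
    edgeEnergy H x ≤ edgeEnergy G x + ∑ k, ∑ i ∈ N k, ∑ j ∈ N k, (x i - x j) ^ 2 := by
  classical
  calc edgeEnergy H x
      ≤ ∑ i, ∑ j, ((if G.Adj i j then (x i - x j) ^ 2 else 0) +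
          ∑ k, if i ∈ N k ∧ j ∈ N k then (x i - x j) ^ 2 else 0) := by
        refine Finset.sum_le_sum fun i _ => Finset.sum_le_sum fun j _ => ?_
        have hG0 : 0 ≤ if G.Adj i j then (x i - x j) ^ 2 else 0 := by positivity
        have hN0 : 0 ≤ ∑ k, if i ∈ N k ∧ j ∈ N k then (x i - x j) ^ 2 else 0 := by positivity
        by_cases hij : H.Adj i j
        · rw [if_pos hij]
          rcases hH i j hij with hGij | ⟨k, hik, hjk⟩
          · rw [if_pos hGij]
            exact le_add_of_nonneg_right hN0
          · refine le_add_of_nonneg_of_le hG0 ?_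
            calc (x i - x j) ^ 2
                = if i ∈ N k ∧ j ∈ N k then (x i - x j) ^ 2 else 0 :=
                  (if_pos ⟨hik, hjk⟩).symm
              _ ≤ _ := Finset.single_le_sum (f := fun k =>
                  if i ∈ N k ∧ j ∈ N k then (x i - x j) ^ 2 else 0)
                  (fun k _ => by positivity) (Finset.mem_univ k)
        · rw [if_neg hij]
          exact add_nonneg hG0 hN0
    _ = edgeEnergy G x + ∑ k, ∑ i ∈ N k, ∑ j ∈ N k, (x i - x j) ^ 2 := by
        simp only [Finset.sum_add_distrib, edgeEnergy]
        congr 1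
        rw [Finset.sum_congr rfl fun i _ => Finset.sum_comm, Finset.sum_comm]
        refine Finset.sum_congr rfl fun k _ => ?_
        simp [ite_and, Finset.sum_ite_mem]

theorem sum_sum_sq_sub_le_edgeEnergy (hN : ∀ i k, i ∈ N k → G.Adj i k) (x : V → ℝ) :
    ∑ k, ∑ i ∈ N k, (x i - x k) ^ 2 ≤ edgeEnergy G x := by
  rw [edgeEnergy, Finset.sum_comm]
  refine Finset.sum_le_sum fun k _ => ?_
  calc ∑ i ∈ N k, (x i - x k) ^ 2
      ≤ ∑ i ∈ Finset.univ.filter (G.Adj · k), (x i - x k) ^ 2 :=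
        Finset.sum_le_sum_of_subset_of_nonneg
          (fun i hi => Finset.mem_filter.mpr ⟨Finset.mem_univ i, hN i k hi⟩)
          fun _ _ _ => sq_nonneg _
    _ = ∑ i, if G.Adj i k then (x i - x k) ^ 2 else 0 := Finset.sum_filter _ _

theorem edgeEnergy_le_of_adj_imp {d : ℕ} (hd : 1 ≤ d) (hcard : ∀ k, (N k).card ≤ d)
    (hN : ∀ i k, i ∈ N k → G.Adj i k)
    (hH : ∀ i j, H.Adj i j → G.Adj i j ∨ ∃ k, i ∈ N k ∧ j ∈ N k) (x : V → ℝ) :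
    edgeEnergy H x ≤ (4 * d - 3) * edgeEnergy G x := by
  have hcliques : ∑ k, ∑ i ∈ N k, ∑ j ∈ N k, (x i - x j) ^ 2 ≤
      4 * (d - 1) * ∑ k, ∑ i ∈ N k, (x i - x k) ^ 2 := by
    rw [Finset.mul_sum]
    exact Finset.sum_le_sum fun k _ => sum_sum_sq_sub_le (N k) (hcard k) x (x k)
  have hd' : (1 : ℝ) ≤ d := by exact_mod_cast hd
  have hS := mul_le_mul_of_nonneg_left (sum_sum_sq_sub_le_edgeEnergy N hN x)
    (by linarith : (0 : ℝ) ≤ 4 * (d - 1))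
  linarith [edgeEnergy_le_add_of_adj_imp N hH x]

end Cliques

end Laplacian

section Resistance

variable {n : ℕ}

theorem lap_adjMatrix (G : SimpleGraph (Fin n)) [DecidableRel G.Adj] :
    lap (G.adjMatrix ℝ) = G.lapMatrix ℝ := by
  rw [lap, SimpleGraph.lapMatrix, SimpleGraph.degMatrix]
  congr
  ext i
  simp [SimpleGraph.degree_eq_sum_if_adj, SimpleGraph.adjMatrix_apply]

theorem single_sub_single_dotProduct (a b : Fin n) (w : Fin n → ℝ) :
    (Pi.single a 1 - Pi.single b 1 : Fin n → ℝ) ⬝ᵥ w = w a - w b := by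
  simp [sub_dotProduct, single_dotProduct]

theorem effRes_adjMatrix_eq {G : SimpleGraph (Fin n)} [DecidableRel G.Adj] {a b : Fin n}
    {w : Fin n → ℝ} (hw : G.lapMatrix ℝ *ᵥ w = Pi.single a 1 - Pi.single b 1) :
    effRes (G.adjMatrix ℝ) a b = w a - w b := by
  have hex : ∃ v, lap (G.adjMatrix ℝ) *ᵥ v = Pi.single a 1 - Pi.single b 1 :=
    ⟨w, by rwa [lap_adjMatrix]⟩
  rw [effRes, dif_pos hex]
  have hv : G.lapMatrix ℝ *ᵥ hex.choose = Pi.single a 1 - Pi.single b 1 := by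
    rw [← lap_adjMatrix]; exact hex.choose_spec
  generalize hex.choose = v at hv ⊢
  -- any two solutions give the same value since the Laplacian is symmetric
  rw [← single_sub_single_dotProduct, ← single_sub_single_dotProduct]
  nth_rw 1 [← hw]
  rw [← hv, dotProduct_comm, dotProduct_mulVec, ← mulVec_transpose,
    (G.isSymm_lapMatrix (R := ℝ)).eq]

theorem effRes_self (C : Matrix (Fin n) (Fin n) ℝ) (a : Fin n) : effRes C a a = 0 := by
  have hex : ∃ v, lap C *ᵥ v = Pi.single a 1 - Pi.single a 1 := ⟨0, by simp⟩
  rw [effRes, dif_pos hex, sub_self]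

theorem effRes_adjMatrix_le_mul {G H : SimpleGraph (Fin n)} [DecidableRel G.Adj]
    [DecidableRel H.Adj] (hG : G.Preconnected) (hH : H.Preconnected) {c : ℝ} (hc : 0 < c)
    (hHG : ∀ x, edgeEnergy H x ≤ c * edgeEnergy G x) (a b : Fin n) :
    effRes (G.adjMatrix ℝ) a b ≤ c * effRes (H.adjMatrix ℝ) a b := by
  have hf : ∑ i, (Pi.single a 1 - Pi.single b 1 : Fin n → ℝ) i = 0 := by
    simp [Finset.sum_sub_distrib]
  obtain ⟨v, hv⟩ := hG.exists_lapMatrix_mulVec_eq hf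
  obtain ⟨w, hw⟩ := hH.exists_lapMatrix_mulVec_eq hf
  rw [effRes_adjMatrix_eq hv, effRes_adjMatrix_eq hw, ← single_sub_single_dotProduct,
    ← single_sub_single_dotProduct]
  refine dotProduct_le_mul_of_quadForm_le (H.posSemidef_lapMatrix ℝ) hc (fun x => ?_) hv hw
  rw [dotProduct_lapMatrix_mulVec, dotProduct_lapMatrix_mulVec]
  linarith [hHG x]

end Resistance

def graphOf {ι R : Type*} [Zero R] (P : Matrix ι ι R) : SimpleGraph ι :=
  SimpleGraph.fromRel fun i j => P i j ≠ 0

theorem adjMat_eq_adjMatrix {n : ℕ} (P : Matrix (Fin n) (Fin n) ℝ)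
    [DecidableRel (graphOf P).Adj] :
    adjMat P = (graphOf P).adjMatrix ℝ := by
  ext i j
  rw [SimpleGraph.adjMatrix_apply]
  simp [adjMat, graphOf]

theorem reachable_graphOf_of_pow_apply_ne_zero {ι R : Type*} [Fintype ι] [DecidableEq ι]
    [Semiring R] (P : Matrix ι ι R) {k : ℕ} {i j : ι} (h : (P ^ k) i j ≠ 0) :
    (graphOf P).Reachable i j := by
  induction k generalizing j with
  | zero =>
    obtain rfl : i = j := by_contra fun hij => h (by rw [pow_zero, one_apply_ne hij])
    rfl
  | succ k ih =>
    rw [pow_succ, mul_apply] at h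
    obtain ⟨m, -, hm⟩ := Finset.exists_ne_zero_of_sum_ne_zero h
    rcases eq_or_ne m j with rfl | hmj
    · exact ih (left_ne_zero_of_mul hm)
    · exact (ih (left_ne_zero_of_mul hm)).trans
        (SimpleGraph.Adj.reachable ⟨hmj, Or.inl (right_ne_zero_of_mul hm)⟩)

theorem mul_apply_ne_zero_iff {ι R : Type*} [Fintype ι] [Semiring R] [PartialOrder R]
    [IsOrderedRing R] [NoZeroDivisors R] {A B : Matrix ι ι R} (hA : ∀ i j, 0 ≤ A i j)
    (hB : ∀ i j, 0 ≤ B i j) (i j : ι) : (A * B) i j ≠ 0 ↔ ∃ k, A i k ≠ 0 ∧ B k j ≠ 0 := by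
  rw [mul_apply, Ne, Finset.sum_eq_zero_iff_of_nonneg fun k _ => mul_nonneg (hA i k) (hB k j)]
  simp

section Pstar

variable {n : ℕ} {P : Matrix (Fin n) (Fin n) ℝ} {mu : Fin n → ℝ}

noncomputable def inNbrs (P : Matrix (Fin n) (Fin n) ℝ) (k : Fin n) : Finset (Fin n) :=
  Finset.univ.filter fun i => i ≠ k ∧ P i k ≠ 0

theorem inDeg_pos_of_apply_ne_zero {i j : Fin n} (hij : i ≠ j) (h : P i j ≠ 0) :
    0 < inDeg P j :=
  Finset.card_pos.mpr ⟨i, by simp [hij, h]⟩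

theorem Pstar_apply (i j : Fin n) : Pstar P mu i j = (mu i)⁻¹ * P j i * mu j := by
  rw [Pstar, mul_diagonal, diagonal_mul, transpose_apply]

theorem Pstar_nonneg (hP : ∀ i j, 0 ≤ P i j) (hmu : ∀ i, 0 < mu i) (i j : Fin n) :
    0 ≤ Pstar P mu i j := by
  have := hmu i; have := hmu j; have := hP j i
  rw [Pstar_apply]; positivity

theorem Pstar_apply_ne_zero (hmu : ∀ i, 0 < mu i) {i j : Fin n} :
    Pstar P mu i j ≠ 0 ↔ P j i ≠ 0 := by
  simp [Pstar_apply, (hmu i).ne', (hmu j).ne']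

theorem graphOf_le_graphOf_Pstar_mul (hP : ∀ i j, 0 ≤ P i j) (hdiag : ∀ i, 0 < P i i)
    (hmu : ∀ i, 0 < mu i) : graphOf P ≤ graphOf (Pstar P mu * P) := by
  have hPP := mul_apply_ne_zero_iff (Pstar_nonneg hP hmu) hP
  rintro i j ⟨hij, h⟩
  refine ⟨hij, h.imp (fun h => (hPP i j).mpr ⟨i, ?_, h⟩) fun h => (hPP j i).mpr ⟨j, ?_, h⟩⟩ <;>
    exact (Pstar_apply_ne_zero hmu).mpr (hdiag _).ne'

theorem adj_graphOf_Pstar_mul (hP : ∀ i j, 0 ≤ P i j) (hmu : ∀ i, 0 < mu i)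
    (hcomm : Pstar P mu * P = P * Pstar P mu) {i j : Fin n}
    (h : (graphOf (Pstar P mu * P)).Adj i j) :
    (graphOf P).Adj i j ∨ ∃ k, i ∈ inNbrs P k ∧ j ∈ inNbrs P k := by
  have hPP := mul_apply_ne_zero_iff hP (Pstar_nonneg hP hmu)
  obtain ⟨hij, h⟩ := h
  rw [hcomm] at h
  obtain ⟨k, hik, hjk⟩ : ∃ k, P i k ≠ 0 ∧ P j k ≠ 0 := by
    rcases h with h | h
    · obtain ⟨k, hik, hkj⟩ := (hPP i j).mp h
      exact ⟨k, hik, (Pstar_apply_ne_zero hmu).mp hkj⟩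
    · obtain ⟨k, hjk, hki⟩ := (hPP j i).mp h
      exact ⟨k, (Pstar_apply_ne_zero hmu).mp hki, hjk⟩
  by_cases hki : k = i
  · exact Or.inl ⟨hij, Or.inr (hki ▸ hjk)⟩
  by_cases hkj : k = j
  · exact Or.inl ⟨hij, Or.inl (hkj ▸ hik)⟩
  exact Or.inr ⟨k, by simp [inNbrs, Ne.symm hki, hik], by simp [inNbrs, Ne.symm hkj, hjk]⟩

end Pstar

/-- If `P*P = PP*`, then
`(1/(4δ_in − 2)) R_{uv}(G(P)) ≤ R_{uv}(G(P*P)) ≤ R_{uv}(G(P))`. -/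
theorem stmt16 {n : ℕ} (P : Matrix (Fin n) (Fin n) ℝ) (mu : Fin n → ℝ)
    (hP : IsConsensus P) (hmu : IsInvMeasure P mu)
    (hcomm : Pstar P mu * P = P * Pstar P mu)
    (din : ℕ) (hdin : (∀ j, inDeg P j ≤ din) ∧ ∃ j, inDeg P j = din) :
    ∀ u v : Fin n,
      (1 / (4 * (din : ℝ) - 2)) * effRes (adjMat P) u v ≤
          effRes (adjMat (Pstar P mu * P)) u v ∧
        effRes (adjMat (Pstar P mu * P)) u v ≤ effRes (adjMat P) u v := by
  classical
  intro u v
  obtain ⟨hPnn, -, hirr, hdiag⟩ := hP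
  have hG : (graphOf P).Preconnected := fun i j =>
    (hirr i j).elim fun _ hk => reachable_graphOf_of_pow_apply_ne_zero P hk.ne'
  have hGH := graphOf_le_graphOf_Pstar_mul hPnn hdiag hmu.1
  have hH := hG.mono hGH
  rw [adjMat_eq_adjMatrix, adjMat_eq_adjMatrix]
  have hupper := effRes_adjMatrix_le_mul hH hG one_pos
    (fun x => by rw [one_mul]; exact edgeEnergy_mono hGH x) u v
  rw [one_mul] at hupper
  refine ⟨?_, hupper⟩
  rcases eq_or_ne u v with rfl | huv
  · simp [effRes_self]
  have : Nontrivial (Fin n) := nontrivial_of_ne u v huv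
  obtain ⟨w, huw, hPuw⟩ := hG.exists_adj_of_nontrivial u
  have hdin1 : 1 ≤ din := by
    rcases hPuw with h | h
    · exact (inDeg_pos_of_apply_ne_zero huw h).trans_le (hdin.1 w)
    · exact (inDeg_pos_of_apply_ne_zero huw.symm h).trans_le (hdin.1 u)
  have hdin' : (1 : ℝ) ≤ din := by exact_mod_cast hdin1
  rw [one_div, inv_mul_le_iff₀ (by linarith)]
  refine effRes_adjMatrix_le_mul hG hH (by linarith) (fun x => ?_) u v
  refine (edgeEnergy_le_of_adj_imp (inNbrs P) hdin1 hdin.1 (fun i k hi => ?_)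
    (fun i j h => adj_graphOf_Pstar_mul hPnn hmu.1 hcomm h) x).trans ?_
  · exact ⟨(Finset.mem_filter.mp hi).2.1, Or.inl (Finset.mem_filter.mp hi).2.2⟩
  · exact mul_le_mul_of_nonneg_right (by linarith) (edgeEnergy_nonneg _ x)
end
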